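/- arXiv:1608.03151 — 8 statements merged into one kernel-verified Lean document; each statement's English description precedes it below -/
import Mathlib

section
/- Let k and l be nonnegative integers, let N₁ be a k×k real diagonal matrix, N₂ an l×l real diagonal matrix, and C an arbitrary k×l complex matrix. Then the determinant of the (k+l)×(k+l) complex block matrix [[N₁, C], [−C*, N₂]] is a real number, where C* denotes the conjugate transpose of C. -/
open Matrix Complex

theorem block_det_real (k l : ℕ)
    (N₁ : Matrix (Fin k) (Fin k) ℝ) (N₂ : Matrix (Fin l) (Fin l) ℝ)
    (hN₁ : ∀ i j, i ≠ j → N₁ i j = 0) (hN₂ : ∀ i j, i ≠ j → N₂ i j = 0)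
    (C : Matrix (Fin k) (Fin l) ℂ) :
    ∃ r : ℝ,
      (Matrix.fromBlocks (N₁.map (Complex.ofReal)) C (-(Cᴴ))
        (N₂.map (Complex.ofReal))).det = (r : ℂ) := by
  set A : Matrix (Fin k) (Fin k) ℂ := N₁.map (Complex.ofReal) with hAdef
  set B : Matrix (Fin l) (Fin l) ℂ := N₂.map (Complex.ofReal) with hBdef
  set M : Matrix (Fin k ⊕ Fin l) (Fin k ⊕ Fin l) ℂ :=
    Matrix.fromBlocks A C (-(Cᴴ)) B with hMdef
  have hA : Aᴴ = A := by
    ext i j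
    by_cases h : i = j
    · subst h; simp [hAdef, Matrix.conjTranspose_apply, Matrix.map_apply]
    · simp [hAdef, Matrix.conjTranspose_apply, Matrix.map_apply,
        hN₁ j i (Ne.symm h), hN₁ i j h]
  have hB : Bᴴ = B := by
    ext i j
    by_cases h : i = j
    · subst h; simp [hBdef, Matrix.conjTranspose_apply, Matrix.map_apply]
    · simp [hBdef, Matrix.conjTranspose_apply, Matrix.map_apply,
        hN₂ j i (Ne.symm h), hN₂ i j h]
  set D : Matrix (Fin k ⊕ Fin l) (Fin k ⊕ Fin l) ℂ :=
    Matrix.fromBlocks 1 0 0 (-1) with hDdef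
  have hDMD : Mᴴ = D * M * D := by
    rw [hMdef, Matrix.fromBlocks_conjTranspose, hA, hB]
    simp [hDdef, Matrix.fromBlocks_multiply, Matrix.fromBlocks_inj]
  have hDD : D * D = 1 := by
    simp [hDdef, Matrix.fromBlocks_multiply]
  have hdet : (starRingEnd ℂ) M.det = M.det := by
    have h1 : (starRingEnd ℂ) M.det = (Mᴴ).det := (Matrix.det_conjTranspose M).symm
    rw [h1, hDMD, Matrix.det_mul, Matrix.det_mul]
    have h2 : D.det * D.det = 1 := by
      rw [← Matrix.det_mul, hDD, Matrix.det_one]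
    calc D.det * M.det * D.det = D.det * D.det * M.det := by ring
      _ = M.det := by rw [h2, one_mul]
  exact ⟨M.det.re, (Complex.conj_eq_iff_re.mp hdet).symm⟩
end

section
/- Let n be a positive integer, M an n×n real matrix whose off-diagonal part is skew-symmetric (M_{jk} = −M_{kj} for all j ≠ k, with arbitrary real diagonal entries), and B an n×n real symmetric matrix with zero diagonal. Suppose there exists a subset S of the index set {1,…,n} such that M_{jk} = 0 and B_{jk} = 0 whenever j ≠ k and j, k are both in S or both in the complement of S. Then det(M + i·B) is a real number, and det [[M, B], [−B, M]] = (det(M + i·B))². -/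
open Matrix Complex

theorem squareness_matrix_form (n : ℕ) (hn : 0 < n)
    (M B : Matrix (Fin n) (Fin n) ℝ)
    (hM : ∀ j k, j ≠ k → M j k = - M k j)
    (hBsymm : ∀ j k, B j k = B k j)
    (hBdiag : ∀ j, B j j = 0)
    (hbip : ∃ S : Finset (Fin n), ∀ j k, j ≠ k → (j ∈ S ↔ k ∈ S) →
      M j k = 0 ∧ B j k = 0) :
    letI Mc : Matrix (Fin n) (Fin n) ℂ := M.map (Complex.ofReal)
    letI Bc : Matrix (Fin n) (Fin n) ℂ := B.map (Complex.ofReal)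
    (∃ r : ℝ, (Mc + Complex.I • Bc).det = (r : ℂ)) ∧
    (Matrix.fromBlocks Mc Bc (-Bc) Mc).det = ((Mc + Complex.I • Bc).det) ^ 2 := by
  obtain ⟨S, hS⟩ := hbip
  set Mc : Matrix (Fin n) (Fin n) ℂ := M.map (Complex.ofReal) with hMc
  set Bc : Matrix (Fin n) (Fin n) ℂ := B.map (Complex.ofReal) with hBc
  show (∃ r : ℝ, (Mc + Complex.I • Bc).det = (r : ℂ)) ∧
    (Matrix.fromBlocks Mc Bc (-Bc) Mc).det = ((Mc + Complex.I • Bc).det) ^ 2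
  set A : Matrix (Fin n) (Fin n) ℂ := Mc + Complex.I • Bc with hA
  have hAapp : ∀ j k, A j k = (M j k : ℂ) + Complex.I * (B j k : ℂ) := by
    intro j k
    simp [hA, hMc, hBc, Matrix.add_apply, Matrix.smul_apply, Matrix.map_apply,
      smul_eq_mul]
  -- the sign diagonal matrix
  set d : Fin n → ℂ := fun j => if j ∈ S then (-1 : ℂ) else 1 with hd
  have hdsq : ∀ j, d j * d j = 1 := by
    intro j; simp only [hd]; split <;> norm_num
  have h1 : A.conjTranspose = Matrix.diagonal d * A * Matrix.diagonal d := by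
    ext j k
    rw [Matrix.conjTranspose_apply, Matrix.mul_diagonal, Matrix.diagonal_mul,
      mul_right_comm]
    rcases eq_or_ne j k with rfl | hjk
    · rw [hdsq, one_mul, hAapp j j, hBdiag]
      simp
    · by_cases hmem : (j ∈ S ↔ k ∈ S)
      · obtain ⟨hm1, hb1⟩ := hS j k hjk hmem
        obtain ⟨hm2, hb2⟩ := hS k j (Ne.symm hjk) hmem.symm
        rw [hAapp, hAapp, hm1, hm2, hb1, hb2]
        simp
      · have hdd : d j * d k = -1 := by
          simp only [hd]
          rcases Decidable.em (j ∈ S) with hj | hj <;>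
            rcases Decidable.em (k ∈ S) with hk | hk <;>
            simp_all
        rw [hdd, hAapp, hAapp, hM k j (Ne.symm hjk), hBsymm k j]
        simp only [Complex.star_def, map_add, _root_.map_mul, Complex.conj_ofReal, Complex.conj_I]
        push_cast
        ring
  -- det A is real
  have hddet : (Matrix.diagonal d).det * (Matrix.diagonal d).det = 1 := by
    rw [← Matrix.det_mul, Matrix.diagonal_mul_diagonal]
    simp [hdsq]
  have hconj : (starRingEnd ℂ) A.det = A.det := by
    have := congrArg Matrix.det h1
    rw [Matrix.det_conjTranspose, Matrix.det_mul, Matrix.det_mul] at this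
    calc (starRingEnd ℂ) A.det = star A.det := rfl
      _ = A.det := by
        rw [this, mul_right_comm, hddet, one_mul]
  -- the conjugate matrix
  have hmapconj : A.map (starRingEnd ℂ) = Mc - Complex.I • Bc := by
    ext j k
    rw [Matrix.map_apply, hAapp]
    simp [hMc, hBc, Matrix.sub_apply, Matrix.smul_apply, Matrix.map_apply,
      smul_eq_mul, Complex.conj_ofReal, sub_eq_add_neg]
  have hdetconj : (Mc - Complex.I • Bc).det = A.det := by
    rw [← hmapconj, ← RingHom.mapMatrix_apply, ← RingHom.map_det, hconj]
  -- block determinant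
  have hblock : (Matrix.fromBlocks Mc Bc (-Bc) Mc).det
      = (Mc - Complex.I • Bc).det * A.det := by
    have hP : (Matrix.fromBlocks (1 : Matrix (Fin n) (Fin n) ℂ) 0
          (Complex.I • 1) 1 * Matrix.fromBlocks Mc Bc (-Bc) Mc) *
          Matrix.fromBlocks (1 : Matrix (Fin n) (Fin n) ℂ) 0
          (-(Complex.I • (1 : Matrix (Fin n) (Fin n) ℂ))) 1
        = Matrix.fromBlocks (Mc - Complex.I • Bc) Bc 0 A := by
      rw [Matrix.fromBlocks_multiply, Matrix.fromBlocks_multiply,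
        Matrix.fromBlocks_inj]
      refine ⟨?_, ?_, ?_, ?_⟩
      all_goals
        simp only [Matrix.one_mul, Matrix.mul_one, Matrix.zero_mul,
          Matrix.mul_zero, add_zero, zero_add, Matrix.smul_mul, Matrix.mul_smul,
          Matrix.mul_neg, Matrix.neg_mul, Matrix.add_mul, Matrix.mul_add,
          smul_add, smul_smul, Complex.I_mul_I, neg_smul, one_smul, neg_neg, hA,
          sub_eq_add_neg]
      all_goals module
    have := congrArg Matrix.det hP
    rw [Matrix.det_mul, Matrix.det_mul, Matrix.det_fromBlocks_zero₁₂,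
      Matrix.det_fromBlocks_zero₁₂, Matrix.det_fromBlocks_zero₂₁] at this
    simpa using this
  constructor
  · exact ⟨A.det.re, ((Complex.conj_eq_iff_re).mp hconj).symm⟩
  · rw [hblock, hdetconj, sq]
end

section
/- Let G be a finite connected simple graph on a vertex set V, equipped with an orientation, i.e. a relation o on V such that o(u,v) implies u and v are adjacent in G, and for every pair of adjacent vertices u, v exactly one of o(u,v), o(v,u) holds. Let π be a graph automorphism of G with π ∘ π = id and π(v) ≠ v for all v ∈ V. Call a subset P ⊆ V adapted to π if: (1) for every v, v ∈ P iff π(v) ∉ P; (2) no vertex v is adjacent to π(v); (3) for all v, v′ ∈ P, o(v, v′) implies o(π(v), π(v′)); (4) for all v, v′ ∈ P with v adjacent to π(v′), one has o(v, π(v′)) iff o(v′, π(v)). Then any two subsets P, P′ ⊆ V adapted to π satisfy P′ = P or P′ = V \ P; that is, the unordered partition {P, V \ P} adapted to π, if it exists, is unique. -/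
open SimpleGraph

/-- A subset `P` of the vertices is *adapted* to the fixed-point free involutive
automorphism `π` (with respect to the orientation `o` of the graph `G`). -/
def IsAdapted {V : Type*} (G : SimpleGraph V) (o : V → V → Prop) (π : V → V)
    (P : Set V) : Prop :=
  (∀ v, v ∈ P ↔ π v ∉ P) ∧
  (∀ v, ¬ G.Adj v (π v)) ∧
  (∀ v v', v ∈ P → v' ∈ P → o v v' → o (π v) (π v')) ∧
  (∀ v v', v ∈ P → v' ∈ P → G.Adj v (π v') → (o v (π v') ↔ o v' (π v)))

lemma adapted_key {V : Type*} (G : SimpleGraph V) (o : V → V → Prop) (π : V → V)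
    (ho_excl : ∀ u v, G.Adj u v → ((o u v ∧ ¬ o v u) ∨ (o v u ∧ ¬ o u v)))
    (hπ_aut : ∀ u v, G.Adj (π u) (π v) ↔ G.Adj u v)
    (hπ_inv : ∀ v, π (π v) = v)
    {P P' : Set V} (hP : IsAdapted G o π P) (hP' : IsAdapted G o π P')
    {u v : V} (hadj : G.Adj u v) (huP : u ∈ P) (huP' : u ∈ P')
    (hvP : v ∈ P) : v ∈ P' := by
  obtain ⟨hP1, _, hP3, _⟩ := hP
  obtain ⟨hQ1, _, _, hQ4⟩ := hP'
  by_contra hvP'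
  have hπv : π v ∈ P' := by
    by_contra h; exact hvP' ((hQ1 v).mpr h)
  have hadj' : G.Adj u (π (π v)) := by rw [hπ_inv]; exact hadj
  have h4 := hQ4 u (π v) huP' hπv hadj'
  rw [hπ_inv] at h4
  have hadjπ : G.Adj (π u) (π v) := (hπ_aut u v).mpr hadj
  rcases ho_excl u v hadj with ⟨h1, h2⟩ | ⟨h1, h2⟩
  · have h3 := hP3 u v huP hvP h1
    rcases ho_excl (π u) (π v) hadjπ with ⟨_, hn⟩ | ⟨_, hn⟩
    · exact hn (h4.mp h1)
    · exact hn h3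
  · have h3 := hP3 v u hvP huP h1
    exact h2 (h4.mpr h3)

lemma adapted_compl {V : Type*} (G : SimpleGraph V) (o : V → V → Prop) (π : V → V)
    (ho_adj : ∀ u v, o u v → G.Adj u v)
    (ho_excl : ∀ u v, G.Adj u v → ((o u v ∧ ¬ o v u) ∨ (o v u ∧ ¬ o u v)))
    (hπ_aut : ∀ u v, G.Adj (π u) (π v) ↔ G.Adj u v)
    (hπ_inv : ∀ v, π (π v) = v)
    {P : Set V} (hP : IsAdapted G o π P) : IsAdapted G o π Pᶜ := by
  obtain ⟨h1, h2, h3, h4⟩ := hP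
  refine ⟨?_, h2, ?_, ?_⟩
  · intro v
    have := h1 v
    simp only [Set.mem_compl_iff]
    tauto
  · intro v v' hv hv' hvv'
    have hπvP : π v ∈ P := by have := h1 v; simp only [Set.mem_compl_iff] at hv; tauto
    have hπv'P : π v' ∈ P := by have := h1 v'; simp only [Set.mem_compl_iff] at hv'; tauto
    have hadj : G.Adj v v' := ho_adj _ _ hvv'
    have hadjπ : G.Adj (π v) (π v') := (hπ_aut v v').mpr hadj
    rcases ho_excl (π v) (π v') hadjπ with ⟨ha, _⟩ | ⟨ha, _⟩
    · exact ha
    · exfalso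
      have hcon := h3 (π v') (π v) hπv'P hπvP ha
      rw [hπ_inv, hπ_inv] at hcon
      rcases ho_excl v v' hadj with ⟨_, hn⟩ | ⟨_, hn⟩
      · exact hn hcon
      · exact hn hvv'
  · intro v v' hv hv' hvadj
    have hπvP : π v ∈ P := by have := h1 v; simp only [Set.mem_compl_iff] at hv; tauto
    have hπv'P : π v' ∈ P := by have := h1 v'; simp only [Set.mem_compl_iff] at hv'; tauto
    have hadjπ : G.Adj (π v) (π (π v')) := (hπ_aut v (π v')).mpr hvadj
    have h' := h4 (π v) (π v') hπvP hπv'P hadjπ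
    rw [hπ_inv, hπ_inv] at h'
    have hadj2 : G.Adj v' (π v) := by
      have hx : G.Adj (π v) v' := by rw [← hπ_inv v']; exact hadjπ
      exact hx.symm
    rcases ho_excl v (π v') hvadj with ⟨a1, a2⟩ | ⟨a1, a2⟩ <;>
      rcases ho_excl v' (π v) hadj2 with ⟨b1, b2⟩ | ⟨b1, b2⟩ <;> tauto

theorem adapted_partition_unique {V : Type*} [Fintype V]
    (G : SimpleGraph V) (hconn : G.Connected)
    (o : V → V → Prop)
    (ho_adj : ∀ u v, o u v → G.Adj u v)
    (ho_excl : ∀ u v, G.Adj u v → ((o u v ∧ ¬ o v u) ∨ (o v u ∧ ¬ o u v)))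
    (π : V → V)
    (hπ_aut : ∀ u v, G.Adj (π u) (π v) ↔ G.Adj u v)
    (hπ_inv : ∀ v, π (π v) = v)
    (hπ_fpf : ∀ v, π v ≠ v)
    (P P' : Set V)
    (hP : IsAdapted G o π P) (hP' : IsAdapted G o π P') :
    P' = P ∨ P' = Pᶜ := by
  have hPc := adapted_compl G o π ho_adj ho_excl hπ_aut hπ_inv hP
  have hP'c := adapted_compl G o π ho_adj ho_excl hπ_aut hπ_inv hP'
  set S : V → Prop := fun v => (v ∈ P ↔ v ∈ P') with hSdef
  have step : ∀ u v, G.Adj u v → S u → S v := by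
    intro u v hadj hSu
    constructor
    · intro hvP
      by_cases hu : u ∈ P
      · exact adapted_key G o π ho_excl hπ_aut hπ_inv hP hP' hadj hu (hSu.mp hu) hvP
      · have hu' : u ∉ P' := fun h => hu (hSu.mpr h)
        by_contra hv'
        exact (adapted_key G o π ho_excl hπ_aut hπ_inv hP'c hPc hadj hu' hu hv') hvP
    · intro hvP'
      by_cases hu : u ∈ P'
      · exact adapted_key G o π ho_excl hπ_aut hπ_inv hP' hP hadj hu (hSu.mpr hu) hvP'
      · have hu2 : u ∉ P := fun h => hu (hSu.mp h)
        by_contra hv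
        exact (adapted_key G o π ho_excl hπ_aut hπ_inv hPc hP'c hadj hu2 hu hv) hvP'
  have reach : ∀ u v, G.Reachable u v → S u → S v := by
    intro u v h
    obtain ⟨w⟩ := h
    induction w with
    | nil => exact id
    | cons h _ ih => exact fun hSu => ih (step _ _ h hSu)
  obtain ⟨v0⟩ := hconn.nonempty
  by_cases h0 : S v0
  · left
    ext v
    exact (reach v0 v (hconn.preconnected v0 v) h0).symm
  · right
    ext v
    simp only [Set.mem_compl_iff]
    constructor
    · intro hv' hv
      exact h0 (reach v v0 (hconn.preconnected v v0) ⟨fun _ => hv', fun _ => hv⟩)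
    · intro hv
      by_contra hv'
      exact h0 (reach v v0 (hconn.preconnected v v0) (iff_of_false hv hv'))
end

section
/- Let n ≥ 1, and let x, a be real numbers. Let K be the 2n×2n complex matrix with K_{jj} = x for all j, K_{j,j+1} = a and K_{j+1,j} = −a for 1 ≤ j ≤ 2n−1, K_{1,2n} = K_{2n,1} = i·a, and all other entries 0. Then for a ≠ 0, det K = a^{2n} · L_{2n}(x/a), where L_m denotes the m-th Lucas polynomial. -/
open Matrix Complex

/-- The Lucas polynomials: `lucas 0 x = 2`, `lucas 1 x = x`,
`lucas (m+2) x = x * lucas (m+1) x + lucas m x`. -/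
def lucas : ℕ → ℝ → ℝ
  | 0, _ => 2
  | 1, x => x
  | (m + 2), x => x * lucas (m + 1) x + lucas m x

/-- The complex adjacency matrix of the cycle dicot `𝒞_{2n}`: diagonal entries `x`,
superdiagonal entries `a`, subdiagonal entries `-a`, and corner entries `i·a`. -/
def cycleDicotMatrix (n : ℕ) (x a : ℝ) : Matrix (Fin (2 * n)) (Fin (2 * n)) ℂ :=
  Matrix.of fun j k =>
    (if j = k then (x : ℂ) else 0) +
    (if (j : ℕ) + 1 = (k : ℕ) then (a : ℂ) else 0) +
    (if (k : ℕ) + 1 = (j : ℕ) then (-a : ℂ) else 0) +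
    (if ((j : ℕ) = 0 ∧ (k : ℕ) = 2 * n - 1) ∨ ((j : ℕ) = 2 * n - 1 ∧ (k : ℕ) = 0)
      then Complex.I * (a : ℝ) else 0)

/-!
Write `N = 2n` and let `P` be the cyclic shift of `Fin N` twisted by `i` at the wrap-around
entry. The transpose of the shift twisted by `-i = i⁻¹` is its inverse, and
`K = x + a (P - P⁻¹)`. If `α + β = x / a` and `α β = -1`, then `K P = a (P + α) (P + β)`, and a
single cofactor expansion, whose two surviving minors are triangular, gives
`det (P + c) = c ^ N - (-1) ^ N ω` for a shift twisted by `ω`. Since `N` is even,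
`det K · (-i) = a ^ N (α ^ N - i) (β ^ N - i) = -i a ^ N (α ^ N + β ^ N)`, and
`α ^ N + β ^ N = L_N (x / a)` is the Binet formula for Lucas polynomials.
-/

theorem lucas_eq_pow_add_pow {y α β : ℝ} (hsum : α + β = y) (hprod : α * β = -1) :
    ∀ m, lucas m y = α ^ m + β ^ m
  | 0 => by norm_num [lucas]
  | 1 => by simp [lucas, hsum]
  | m + 2 => by
    rw [lucas, lucas_eq_pow_add_pow hsum hprod (m + 1), lucas_eq_pow_add_pow hsum hprod m,
      ← hsum]
    linear_combination (α ^ m + β ^ m) * hprod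

theorem exists_add_eq_mul_eq_neg_one (y : ℝ) : ∃ α β : ℝ, α + β = y ∧ α * β = -1 := by
  have hd : Real.sqrt (y ^ 2 + 4) ^ 2 = y ^ 2 + 4 := Real.sq_sqrt (by positivity)
  exact ⟨(y + Real.sqrt (y ^ 2 + 4)) / 2, (y - Real.sqrt (y ^ 2 + 4)) / 2, by ring,
    by linear_combination -hd / 4⟩

namespace Matrix

variable {R : Type*} [CommRing R]

def twistedShift (N : ℕ) (ω : R) : Matrix (Fin N) (Fin N) R :=
  (finRotate N).permMatrix R * diagonal fun k : Fin N => if (k : ℕ) = 0 then ω else 1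

theorem twistedShift_apply {N : ℕ} (ω : R) (j k : Fin N) :
    twistedShift N ω j k =
      (if (j : ℕ) + 1 = k then 1 else 0) + (if (j : ℕ) = N - 1 ∧ (k : ℕ) = 0 then ω else 0) := by
  cases N with
  | zero => exact j.elim0
  | succ m =>
    simp only [twistedShift, mul_diagonal, PEquiv.toMatrix_toPEquiv_apply, Pi.single_apply,
      Fin.ext_iff, coe_finRotate, Fin.val_last]
    split_ifs <;> first | omega | simp

theorem transpose_twistedShift_mul {N : ℕ} {ω ω' : R} (h : ω' * ω = 1) :
    (twistedShift N ω')ᵀ * twistedShift N ω = 1 := by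
  rw [twistedShift, twistedShift, transpose_mul, transpose_permMatrix, diagonal_transpose,
    Matrix.mul_assoc, ← Matrix.mul_assoc (Equiv.Perm.permMatrix R _), ← permMatrix_mul,
    mul_inv_cancel, permMatrix_one, Matrix.one_mul, diagonal_mul_diagonal, ← diagonal_one]
  congr 1
  ext k
  split_ifs <;> simp [h]

theorem det_twistedShift_add_smul_one {N : ℕ} (hN : 0 < N) (ω c : R) :
    det (twistedShift N ω + c • 1) = c ^ N - (-1) ^ N * ω := by
  obtain ⟨m, rfl⟩ := Nat.exists_eq_succ_of_ne_zero hN.ne'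
  set A := twistedShift m.succ ω + c • 1
  have hA : ∀ j k : Fin m.succ, A j k = (if (j : ℕ) + 1 = k then 1 else 0) +
      (if (j : ℕ) = m ∧ (k : ℕ) = 0 then ω else 0) + (if (j : ℕ) = k then c else 0) := by
    intro j k
    simp only [A, add_apply, twistedShift_apply, smul_apply, one_apply, Fin.ext_iff]
    simp
  rw [det_succ_column_zero]
  rcases m with _ | m
  · rw [Fin.sum_univ_one, hA, det_isEmpty]
    norm_num
    ring
  have hdiag : det (A.submatrix Fin.succ Fin.succ) = c ^ (m + 1) := by
    rw [det_of_isUpperTriangular]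
    · simp [hA]
    · intro i j hij
      rw [id, id, Fin.lt_def] at hij
      simp only [submatrix_apply, hA, Fin.val_succ]
      split_ifs <;> first | omega | simp_all
  have hcorner : det (A.submatrix Fin.castSucc Fin.succ) = 1 := by
    rw [det_of_isLowerTriangular]
    · simp [hA]
    · intro i j hij
      rw [OrderDual.toDual_lt_toDual, Fin.lt_def] at hij
      simp only [submatrix_apply, hA, Fin.val_succ, Fin.val_castSucc]
      split_ifs <;> first | omega | simp_all
  have hcol : ∀ i : Fin (m + 2), i ≠ 0 ∧ i ≠ Fin.last (m + 1) → A i 0 = 0 := by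
    rintro i ⟨hi0, hilast⟩
    rw [Ne, Fin.ext_iff] at hi0 hilast
    rw [hA]
    simp only [Fin.val_zero, Fin.val_last] at hi0 hilast ⊢
    split_ifs <;> first | omega | simp_all
  have h00 : A 0 0 = c := by simp [hA]
  have hlast0 : A (Fin.last (m + 1)) 0 = ω := by simp [hA]
  rw [Fintype.sum_eq_add 0 (Fin.last (m + 1)) (by simp [Fin.ext_iff])
    (fun i hi => by simp [hcol i hi]), Fin.succAbove_zero, Fin.succAbove_last, h00, hlast0,
    hdiag, hcorner, Fin.val_zero, Fin.val_last, Nat.succ_eq_add_one]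
  ring

theorem det_twistedShift {N : ℕ} (hN : 0 < N) (ω : R) :
    det (twistedShift N ω) = -(-1) ^ N * ω := by
  simpa [zero_pow hN.ne'] using det_twistedShift_add_smul_one hN ω 0

end Matrix

theorem cycleDicotMatrix_eq_twistedShift (n : ℕ) (x a : ℝ) :
    cycleDicotMatrix n x a =
      (x : ℂ) • 1 + (a : ℂ) • (twistedShift (2 * n) I - (twistedShift (2 * n) (-I))ᵀ) := by
  ext j k
  simp only [cycleDicotMatrix, of_apply, Matrix.add_apply, Matrix.smul_apply, one_apply,
    Matrix.sub_apply, transpose_apply, twistedShift_apply, Fin.ext_iff, smul_eq_mul]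
  split_ifs <;> first | omega | ring

theorem cycleDicotMatrix_mul_twistedShift (n : ℕ) {x a α β : ℝ} (ha : a ≠ 0)
    (hsum : α + β = x / a) (hprod : α * β = -1) :
    cycleDicotMatrix n x a * twistedShift (2 * n) I =
      (a : ℂ) • ((twistedShift (2 * n) I + (α : ℂ) • 1) *
        (twistedShift (2 * n) I + (β : ℂ) • 1)) := by
  have hx : (x : ℂ) = a * (α + β) := by
    have : x = a * (α + β) := by rw [hsum]; field_simp
    exact_mod_cast this
  have hprod' : (α : ℂ) * β = -1 := by exact_mod_cast hprod
  have hinv : (twistedShift (2 * n) (-I))ᵀ * twistedShift (2 * n) I = 1 :=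
    transpose_twistedShift_mul (by simp)
  rw [cycleDicotMatrix_eq_twistedShift, hx]
  simp only [add_mul, mul_add, sub_mul, smul_mul_assoc, mul_smul_comm, Matrix.one_mul,
    Matrix.mul_one, hinv]
  linear_combination (norm := module)
    hprod' • (-(a : ℂ) • (1 : Matrix (Fin (2 * n)) (Fin (2 * n)) ℂ))

theorem cycleDicot_partition_function (n : ℕ) (hn : 1 ≤ n) (x a : ℝ) (ha : a ≠ 0) :
    (cycleDicotMatrix n x a).det = ((a ^ (2 * n) * lucas (2 * n) (x / a) : ℝ) : ℂ) := by
  obtain ⟨α, β, hsum, hprod⟩ := exists_add_eq_mul_eq_neg_one (x / a)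
  have hN : 0 < 2 * n := by omega
  have heven : (-1 : ℂ) ^ (2 * n) = 1 := (even_two_mul n).neg_one_pow
  have hdet := congrArg det (cycleDicotMatrix_mul_twistedShift n ha hsum hprod)
  rw [det_mul, det_smul, det_mul, det_twistedShift hN, det_twistedShift_add_smul_one hN,
    det_twistedShift_add_smul_one hN, Fintype.card_fin, heven] at hdet
  have hpow : (α : ℂ) ^ (2 * n) * (β : ℂ) ^ (2 * n) = 1 := by
    rw [← mul_pow, ← Complex.ofReal_mul, hprod]
    push_cast
    exact heven
  have hfactor : ((α : ℂ) ^ (2 * n) - 1 * I) * ((β : ℂ) ^ (2 * n) - 1 * I) =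
      -1 * I * ((α : ℂ) ^ (2 * n) + (β : ℂ) ^ (2 * n)) := by
    linear_combination hpow + I_sq
  rw [lucas_eq_pow_add_pow hsum hprod]
  push_cast
  refine mul_right_cancel₀ (b := -1 * I) (by simp) ?_
  rw [hdet, hfactor]
  ring
end

section
/- For every real number c > 0, the integral ∫₀¹ log( c² + 4·cos²(π t / 2) ) dt equals 2 · log( (c + √(c² + 4)) / 2 ). -/
/-!
With `b = (c + √(c² + 4)) / 2` and `a = 1 / b` one has `a² + b² = c² + 2` and `ab = 1`, so
`c² + 4 cos² (θ / 2) = a² + b² + 2ab cos θ = ‖b e^{iθ} + a‖²`. The reflection `t ↦ 2 - t` turns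
the integral over `[0, 1]` into half an integral over a full period, that is, into twice the
circle average of `log ‖z + a‖` over `|z| = b`. Since `|a| ≤ b`, Jensen's formula for a single
zero evaluates this average to `log b`.
-/

open Real intervalIntegral MeasureTheory

lemma norm_circleMap_zero_add_ofReal_sq (a b θ : ℝ) :
    ‖circleMap 0 b θ + a‖ ^ 2 = a ^ 2 + b ^ 2 + 2 * a * b * cos θ := by
  rw [circleMap_zero, ← Complex.normSq_eq_norm_sq, Complex.normSq_apply]
  simp only [Complex.add_re, Complex.mul_re, Complex.ofReal_re, Complex.exp_ofReal_mul_I_re,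
    Complex.ofReal_im, Complex.exp_ofReal_mul_I_im, zero_mul, sub_zero, Complex.add_im,
    Complex.mul_im, add_zero]
  nlinarith [sin_sq_add_cos_sq θ]

theorem integral_log_sq_add_sq_add_two_mul_mul_cos {a b : ℝ} (hab : |a| ≤ |b|) :
    ∫ θ in 0..2 * π, log (a ^ 2 + b ^ 2 + 2 * a * b * cos θ) = 4 * π * log |b| := by
  have hav := circleAverage_log_norm_sub_const_of_mem_closedBall (a := (-a : ℂ)) (c := 0)
    (R := b) (by simpa using hab)
  rw [circleAverage_def, smul_eq_mul, inv_mul_eq_iff_eq_mul₀ (by positivity)] at hav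
  simp only [sub_neg_eq_add] at hav
  simp_rw [← norm_circleMap_zero_add_ofReal_sq, log_pow, intervalIntegral.integral_const_mul,
    hav, log_abs]
  push_cast
  ring

section

variable {E : Type*} [NormedAddCommGroup E] [NormedSpace ℝ E]

theorem integral_zero_two_mul_of_symm {f : ℝ → E} {a : ℝ}
    (hf : IntervalIntegrable f volume 0 (2 * a)) (hsymm : ∀ x, f (2 * a - x) = f x) :
    ∫ x in 0..2 * a, f x = 2 • ∫ x in 0..a, f x := by
  have ha : a ∈ Set.uIcc 0 (2 * a) := by
    rcases le_total 0 a with h | h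
    · exact Set.mem_uIcc.2 (Or.inl ⟨h, by linarith⟩)
    · exact Set.mem_uIcc.2 (Or.inr ⟨by linarith, h⟩)
  have h₁ : IntervalIntegrable f volume 0 a :=
    hf.mono_set (Set.uIcc_subset_uIcc Set.left_mem_uIcc ha)
  have h₂ : IntervalIntegrable f volume a (2 * a) :=
    hf.mono_set (Set.uIcc_subset_uIcc ha Set.right_mem_uIcc)
  have hreflect : ∫ x in a..2 * a, f x = ∫ x in 0..a, f x := by
    have := integral_comp_sub_left f (2 * a) (a := 0) (b := a)
    rwa [show 2 * a - a = a by ring, sub_zero, integral_congr fun x _ ↦ hsymm x, eq_comm] at this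
  rw [← integral_add_adjacent_intervals h₁ h₂, hreflect, two_smul]

theorem integral_comp_cos_pi_mul {f : ℝ → E}
    (hf : IntervalIntegrable (fun θ ↦ f (cos θ)) volume 0 (2 * π)) :
    ∫ t in 0..1, f (cos (π * t)) = (2 * π)⁻¹ • ∫ θ in 0..2 * π, f (cos θ) := by
  have hint : IntervalIntegrable (fun t ↦ f (cos (π * t))) volume 0 (2 * 1) := by
    simpa [pi_ne_zero] using hf.comp_mul_left (c := π)
  have hsymm : ∀ t, f (cos (π * (2 * 1 - t))) = f (cos (π * t)) := fun t ↦ by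
    rw [show π * (2 * 1 - t) = -(π * t) + 2 * π by ring, cos_add_two_pi, cos_neg]
  have hfold := integral_zero_two_mul_of_symm hint hsymm
  rw [integral_comp_mul_left (fun θ ↦ f (cos θ)) pi_ne_zero, mul_zero, mul_one,
    mul_comm π 2] at hfold
  rw [mul_inv, mul_smul, hfold, ← Nat.cast_smul_eq_nsmul ℝ, smul_smul]
  norm_num

end

theorem cycleDicot_free_energy_integral (c : ℝ) (hc : 0 < c) :
    ∫ t in (0:ℝ)..1, Real.log (c ^ 2 + 4 * Real.cos (Real.pi * t / 2) ^ 2)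
      = 2 * Real.log ((c + Real.sqrt (c ^ 2 + 4)) / 2) := by
  set s := √(c ^ 2 + 4)
  set a := (s - c) / 2 with ha_def
  set b := (c + s) / 2 with hb_def
  have hs : s ^ 2 = c ^ 2 + 4 := sq_sqrt (by positivity)
  have hcs : c < s := (lt_sqrt hc.le).2 (by linarith)
  have ha : 0 < a := by rw [ha_def]; linarith
  have hab : a ≤ b := by rw [ha_def, hb_def]; linarith
  have hsum : a ^ 2 + b ^ 2 = c ^ 2 + 2 := by linear_combination hs / 2
  have hprod : a * b = 1 := by linear_combination hs / 4
  have hpos : ∀ θ, 0 < a ^ 2 + b ^ 2 + 2 * a * b * cos θ := fun θ ↦ by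
    rw [hsum, mul_assoc 2, hprod]
    nlinarith [neg_one_le_cos θ]
  have hint : IntervalIntegrable (fun θ ↦ log (a ^ 2 + b ^ 2 + 2 * a * b * cos θ)) volume 0
      (2 * π) :=
    ((continuous_const.add (continuous_const.mul continuous_cos)).log
      fun θ ↦ (hpos θ).ne').intervalIntegrable _ _
  calc ∫ t in (0:ℝ)..1, log (c ^ 2 + 4 * cos (π * t / 2) ^ 2)
      = ∫ t in (0:ℝ)..1, log (a ^ 2 + b ^ 2 + 2 * a * b * cos (π * t)) := by
        refine integral_congr fun t _ ↦ ?_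
        rw [cos_sq, show 2 * (π * t / 2) = π * t by ring, hsum, mul_assoc 2, hprod]
        ring_nf
    _ = (2 * π)⁻¹ * (4 * π * log |b|) := by
        refine (integral_comp_cos_pi_mul (f := fun x ↦ log (a ^ 2 + b ^ 2 + 2 * a * b * x))
          hint).trans ?_
        rw [smul_eq_mul, integral_log_sq_add_sq_add_two_mul_mul_cos]
        rwa [abs_of_pos ha, abs_of_pos (ha.trans_le hab)]
    _ = 2 * log b := by
        rw [log_abs]
        field_simp
        ring
end

section
/- Let m, n ≥ 1 and let x, a, b be real numbers. Let K̃ be the 2mn×2mn complex matrix K̃ = I_n ⊗ T_{2m}(−a, x, a) + T_n(−b, 0, b) ⊗ J_{2m} + i·b·(E_{nn} ⊗ J_{2m}), where E_{nn} is the n×n matrix whose only nonzero entry is a 1 in position (n, n). Then det K̃ = ∏_{j=1}^{m} ∏_{k=1}^{n} ( x² + 4a² cos²(jπ/(2m+1)) + 4b² cos²(kπ/(2n+1)) ); in particular det K̃ is real and its square equals the partition function of the monopole-dimer model on the 2m×2n grid graph. -/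
open Matrix Kronecker Real Finset

/-- The `n × n` tridiagonal Toeplitz matrix with `c₀` on the diagonal, `c₁` on the
superdiagonal and `c₋₁` on the subdiagonal. -/
def triToeplitz (n : ℕ) (cm c0 cp : ℂ) : Matrix (Fin n) (Fin n) ℂ :=
  Matrix.of fun j k =>
    if j = k then c0
    else if (j : ℕ) + 1 = (k : ℕ) then cp
    else if (k : ℕ) + 1 = (j : ℕ) then cm
    else 0

/-- The `m × m` antidiagonal matrix of ones. -/
def antiDiagOnes (m : ℕ) : Matrix (Fin m) (Fin m) ℂ :=
  Matrix.of fun j k => if (j : ℕ) + (k : ℕ) + 1 = m then 1 else 0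

/-- The `n × n` matrix whose only nonzero entry is a `1` in the bottom-right corner. -/
def cornerOne (n : ℕ) : Matrix (Fin n) (Fin n) ℂ :=
  Matrix.of fun j k => if (j : ℕ) = n - 1 ∧ (k : ℕ) = n - 1 then 1 else 0

/-!
Write `K̃ = 1 ⊗ T + S ⊗ J` with `T = T_{2m}(-a, x, a)`, `J` the reversal and
`S = T_n(-b, 0, b) + i b E_{nn}`. Both `T` and `S` are diagonalised by sine vectors
`k ↦ iᵏ sin (k θ)`: for `T` with `θ = jπ/(2m+1)` and eigenvalue `x + 2ia cos θ`, for `S`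
with `θ = (2l-1)π/(2n+1)` and eigenvalue `2ib cos θ`. Conjugating by the eigenvectors of `S`
splits `det K̃` into `∏ₗ det (T + μₗ J)`. In the eigenbasis of `T` the reversal `J` becomes a
signed reversal, so `T + μ J` decouples into `2 × 2` blocks pairing `θ` with `π - θ`, each of
determinant `x² + 4a² cos² θ - μ²`. Finally the odd angles `(2l-1)π/(2n+1)` have the same
`cos²` as the angles `kπ/(2n+1)`, `k ≤ n`, while `T_{2n}(-b, 0, b)` has eigenvalues
`2ib cos (kπ/(2n+1))`, `k ≤ 2n`, in which every `cos²` occurs twice: this gives the square.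
-/

open Complex (I)

namespace Matrix

variable {R : Type*} [CommRing R] {n p : Type*} [Fintype n] [DecidableEq n]
  [Fintype p] [DecidableEq p]

theorem det_eq_det_of_mul_eq_mul {A B P : Matrix n n R} (hP : IsUnit P.det)
    (h : A * P = P * B) : A.det = B.det :=
  hP.mul_left_cancel <| by rw [mul_comm, ← det_mul, h, det_mul]

theorem mul_transpose_of_eq_mul_diagonal_of_mulVec_eq_smul {A : Matrix n n R} {v : n → n → R}
    {μ : n → R} (h : ∀ j, A *ᵥ v j = μ j • v j) :
    A * (of v)ᵀ = (of v)ᵀ * diagonal μ := by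
  ext k j
  rw [mul_diagonal]
  simpa [mul_apply, mulVec, dotProduct, mul_comm] using congrFun (h j) k

theorem isUnit_det_transpose_of_of_mulVec_eq_smul {K : Type*} [Field K] {A : Matrix n n K}
    {v : n → n → K} {μ : n → K} (hμ : Function.Injective μ) (hv : ∀ j, v j ≠ 0)
    (h : ∀ j, A *ᵥ v j = μ j • v j) : IsUnit (of v)ᵀ.det := by
  rw [← isUnit_iff_isUnit_det, ← linearIndependent_cols_iff_isUnit]
  exact Module.End.eigenvectors_linearIndependent' (toLin' A) μ hμ v fun j =>
    ⟨Module.End.mem_eigenspace_iff.mpr (by simpa using h j), hv j⟩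

theorem det_one_kronecker_add_diagonal_kronecker (μ : p → R) (A B : Matrix n n R) :
    det ((1 : Matrix p p R) ⊗ₖ A + diagonal μ ⊗ₖ B) = ∏ l, det (A + μ l • B) := by
  have hblock : (1 : Matrix p p R) ⊗ₖ A + diagonal μ ⊗ₖ B
      = (blockDiagonal fun l => A + μ l • B).submatrix (Equiv.prodComm p n)
          (Equiv.prodComm p n) := by
    ext ⟨l, j⟩ ⟨l', j'⟩
    by_cases hl : l = l' <;> simp [blockDiagonal_apply, hl]
  rw [hblock, det_submatrix_equiv_self, det_blockDiagonal]

theorem det_one_kronecker_add_kronecker_of_mul_eq_mul_diagonal {S U : Matrix p p R}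
    {μ : p → R} (hU : IsUnit U.det) (hSU : S * U = U * diagonal μ) (A B : Matrix n n R) :
    det ((1 : Matrix p p R) ⊗ₖ A + S ⊗ₖ B) = ∏ l, det (A + μ l • B) := by
  rw [← det_one_kronecker_add_diagonal_kronecker]
  refine det_eq_det_of_mul_eq_mul (P := U ⊗ₖ 1) (by simpa [det_kronecker] using hU.pow _) ?_
  simp only [add_mul, mul_add, ← mul_kronecker_mul, hSU, one_mul, mul_one]

end Matrix

noncomputable def finMirrorPairs (m : ℕ) : Fin 2 × Fin m ≃ Fin (2 * m) :=
  Equiv.ofBijective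
    (fun it => if it.1 = 0 then Fin.castLE (by omega) it.2 else (Fin.castLE (by omega) it.2).rev)
    ((Fintype.bijective_iff_injective_and_card _).mpr ⟨by
      rintro ⟨i, t⟩ ⟨i', t'⟩ h
      fin_cases i <;> fin_cases i' <;> simp [Fin.ext_iff] at h ⊢ <;> omega, by simp⟩)

theorem det_diagonal_add_antiDiagOnes_mul_diagonal (m : ℕ) (d e : Fin (2 * m) → ℂ) :
    det (diagonal d + antiDiagOnes (2 * m) * diagonal e)
      = ∏ t : Fin m, (d (Fin.castLE (by omega) t) * d (Fin.castLE (by omega) t).rev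
          - e (Fin.castLE (by omega) t) * e (Fin.castLE (by omega) t).rev) := by
  rw [← det_submatrix_equiv_self (finMirrorPairs m)]
  have hblock : (diagonal d + antiDiagOnes (2 * m) * diagonal e).submatrix (finMirrorPairs m)
      (finMirrorPairs m) = blockDiagonal fun t =>
        !![d (Fin.castLE (by omega) t), e (Fin.castLE (by omega) t).rev;
          e (Fin.castLE (by omega) t), d (Fin.castLE (by omega) t).rev] := by
    ext ⟨i, t⟩ ⟨i', t'⟩
    simp only [finMirrorPairs, Equiv.ofBijective_apply, submatrix_apply]
    fin_cases i <;> fin_cases i' <;>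
      simp [blockDiagonal_apply, antiDiagOnes, diagonal_apply, Fin.ext_iff] <;>
      (try split_ifs) <;> first | omega | simp_all [← Fin.ext_iff]
  rw [hblock, det_blockDiagonal]
  refine prod_congr rfl fun t _ => ?_
  rw [det_fin_two_of, mul_comm (e _)]

theorem antiDiagOnes_mul_apply {N : ℕ} {α : Type*} (M : Matrix (Fin N) α ℂ) (k : Fin N)
    (j : α) : (antiDiagOnes N * M) k j = M k.rev j := by
  rw [mul_apply, sum_eq_single k.rev]
  · simp [antiDiagOnes, Fin.val_rev]; omega
  · intro s _ hs
    simp only [antiDiagOnes, of_apply]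
    rw [if_neg (fun h => hs (Fin.ext (by simp [Fin.val_rev]; omega))), zero_mul]
  · simp

theorem mul_antiDiagOnes_apply {N : ℕ} {α : Type*} (M : Matrix α (Fin N) ℂ) (k : α)
    (j : Fin N) : (M * antiDiagOnes N) k j = M k j.rev := by
  rw [mul_apply, sum_eq_single j.rev]
  · simp [antiDiagOnes, Fin.val_rev]; omega
  · intro s _ hs
    simp only [antiDiagOnes, of_apply]
    rw [if_neg (fun h => hs (Fin.ext (by simp [Fin.val_rev]; omega))), mul_zero]
  · simp

theorem triToeplitz_mulVec_apply {N : ℕ} (cm c0 cp : ℂ) (F : ℕ → ℂ) (hF : F 0 = 0)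
    (k : Fin N) :
    (triToeplitz N cm c0 cp *ᵥ fun s => F (s + 1)) k
      = cm * F k + c0 * F (k + 1) + cp * F (k + 2)
        - if (k : ℕ) + 1 = N then cp * F (N + 1) else 0 := by
  have hterm : ∀ s : ℕ, (if (k : ℕ) = s then c0 else if (k : ℕ) + 1 = s then cp
        else if s + 1 = k then cm else 0) * F (s + 1)
      = (if s = k then c0 * F (k + 1) else 0) + (if s = k + 1 then cp * F (k + 2) else 0)
        + (if s + 1 = k then cm * F (s + 1) else 0) := by
    intro s
    split_ifs <;> first | omega | (subst_vars; ring)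
  have hsub : ∑ s ∈ range N, (if s + 1 = k then cm * F (s + 1) else 0) = cm * F k := by
    obtain ⟨k, hk⟩ := k
    cases k with
    | zero => simp [hF]
    | succ k => simp [sum_ite_eq', show k < N by omega]
  simp only [mulVec, dotProduct, triToeplitz, of_apply, Fin.ext_iff]
  rw [Fin.sum_univ_eq_sum_range (fun s => (if (k : ℕ) = s then c0
        else if (k : ℕ) + 1 = s then cp else if s + 1 = k then cm else 0) * F (s + 1)),
    sum_congr rfl fun s _ => hterm s, sum_add_distrib, sum_add_distrib, sum_ite_eq',
    sum_ite_eq', hsub, if_pos (mem_range.2 k.2)]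
  by_cases hk : (k : ℕ) + 1 = N
  · rw [if_pos hk, if_neg (by simp [hk]), show N + 1 = (k : ℕ) + 2 by omega]
    ring
  · rw [if_neg hk, if_pos (mem_range.2 (by omega))]
    ring

theorem cornerOne_mulVec_apply {n : ℕ} (F : ℕ → ℂ) (k : Fin n) :
    (cornerOne n *ᵥ fun s => F (s + 1)) k = if (k : ℕ) + 1 = n then F n else 0 := by
  simp only [mulVec, dotProduct, cornerOne, of_apply]
  rw [Fin.sum_univ_eq_sum_range
    (fun s => (if (k : ℕ) = n - 1 ∧ s = n - 1 then 1 else 0) * F (s + 1))]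
  by_cases hk : (k : ℕ) + 1 = n
  · simp [show (k : ℕ) = n - 1 by omega, Nat.sub_add_cancel (show 1 ≤ n by omega)]
    omega
  · simp [hk, show (k : ℕ) ≠ n - 1 by omega]

/-- The factor `iˢ` turns the recurrence of the skew matrix `T(-a, x, a)` into the Chebyshev
recurrence `sin ((s+2)θ) + sin (sθ) = 2 cos θ sin ((s+1)θ)`. -/
noncomputable def sineSeq (θ : ℝ) (s : ℕ) : ℂ := I ^ s * (sin (s * θ) : ℂ)

noncomputable def sineVec (N : ℕ) (θ : ℝ) : Fin N → ℂ := fun k => sineSeq θ (k + 1)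

theorem sineSeq_zero (θ : ℝ) : sineSeq θ 0 = 0 := by simp [sineSeq]

theorem sineSeq_add_two (θ : ℝ) (s : ℕ) :
    sineSeq θ (s + 2) - sineSeq θ s = 2 * I * cos θ * sineSeq θ (s + 1) := by
  have hsin : sin ((s + 2 : ℕ) * θ) + sin (s * θ) = 2 * cos θ * sin ((s + 1 : ℕ) * θ) := by
    push_cast
    rw [show ((s : ℝ) + 2) * θ = (s + 1) * θ + θ by ring,
      show (s : ℝ) * θ = (s + 1) * θ - θ by ring, sin_add, sin_sub]
    ring
  have hsinC : (sin ((s + 2 : ℕ) * θ) : ℂ) + sin (s * θ)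
      = 2 * cos θ * sin ((s + 1 : ℕ) * θ) := by
    exact_mod_cast hsin
  simp only [sineSeq, pow_add, pow_one]
  linear_combination (-I ^ s) * hsinC
    + (I ^ s * sin ((s + 2 : ℕ) * θ) - 2 * I ^ s * cos θ * sin ((s + 1 : ℕ) * θ))
      * Complex.I_sq

theorem triToeplitz_mulVec_sineVec_apply {N : ℕ} (x a : ℂ) (θ : ℝ) (k : Fin N) :
    (triToeplitz N (-a) x a *ᵥ sineVec N θ) k
      = (x + 2 * I * a * cos θ) * sineVec N θ k
        - if (k : ℕ) + 1 = N then a * sineSeq θ (N + 1) else 0 := by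
  unfold sineVec
  rw [triToeplitz_mulVec_apply _ _ _ _ (sineSeq_zero θ)]
  linear_combination a * sineSeq_add_two θ k

theorem triToeplitz_mulVec_sineVec {N : ℕ} (x a : ℂ) {θ : ℝ} (hθ : sin ((N + 1) * θ) = 0) :
    triToeplitz N (-a) x a *ᵥ sineVec N θ = (x + 2 * I * a * cos θ) • sineVec N θ := by
  funext k
  rw [triToeplitz_mulVec_sineVec_apply, sineSeq]
  simp [hθ]

theorem triToeplitz_add_smul_cornerOne_mulVec_sineVec {n : ℕ} (b : ℂ) {θ : ℝ}
    (hθ : sin ((n + 1) * θ) = sin (n * θ)) :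
    (triToeplitz n (-b) 0 b + (I * b) • cornerOne n) *ᵥ sineVec n θ
      = (2 * I * b * cos θ) • sineVec n θ := by
  have hedge : sineSeq θ (n + 1) = I * sineSeq θ n := by
    simp only [sineSeq, Nat.cast_add, Nat.cast_one, hθ, pow_succ]
    ring
  funext k
  rw [add_mulVec, smul_mulVec, Pi.add_apply, Pi.smul_apply, triToeplitz_mulVec_sineVec_apply]
  unfold sineVec
  rw [cornerOne_mulVec_apply, Pi.smul_apply, smul_eq_mul, smul_eq_mul]
  split_ifs
  · rw [hedge]
    ring
  · ring

noncomputable def reversalPhase (N j : ℕ) : ℂ := I ^ (N - 1) * (-1) ^ j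

theorem reversalPhase_mul_reversalPhase_rev {N : ℕ} (j : Fin N) :
    reversalPhase N j * reversalPhase N j.rev = 1 := by
  have hsum : (j : ℕ) + j.rev = N - 1 := by simp only [Fin.val_rev]; omega
  calc reversalPhase N j * reversalPhase N j.rev
      = (I ^ 2) ^ (N - 1) * (-1) ^ ((j : ℕ) + j.rev) := by simp only [reversalPhase]; ring
    _ = 1 := by rw [hsum, Complex.I_sq, ← mul_pow]; norm_num

theorem sineVec_rev {N j : ℕ} {θ : ℝ} (hθ : (N + 1) * θ = (j + 1) * π) (k : Fin N) :
    sineVec N θ k.rev = reversalPhase N j * sineVec N (π - θ) k := by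
  obtain ⟨r, hr, hNr⟩ : ∃ r, (k.rev : ℕ) = r ∧ N - 1 = k + r :=
    ⟨_, rfl, by simp only [Fin.val_rev]; omega⟩
  have hNr' : (r : ℝ) + (k : ℕ) + 2 = N + 1 := by norm_cast; omega
  have hsin : sin ((r + 1 : ℕ) * θ) = (-1) ^ j * sin (((k : ℕ) + 1 : ℕ) * θ) := by
    rw [show ((r + 1 : ℕ) : ℝ) * θ = (j + 1 : ℕ) * π - ((k : ℕ) + 1 : ℕ) * θ by
      push_cast; linear_combination hθ + θ * hNr']
    rw [sin_nat_mul_pi_sub, pow_succ]; ring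
  have hsin' : sin (((k : ℕ) + 1 : ℕ) * (π - θ))
      = (-1) ^ (k : ℕ) * sin (((k : ℕ) + 1 : ℕ) * θ) := by
    rw [mul_sub, sin_nat_mul_pi_sub, pow_succ]; ring
  have hphase : I ^ ((k : ℕ) + r) * I ^ ((k : ℕ) + 1) * (-1) ^ (k : ℕ) = I ^ (r + 1) := by
    rw [show I ^ ((k : ℕ) + r) * I ^ ((k : ℕ) + 1) * (-1) ^ (k : ℕ)
        = I ^ (r + 1) * (I ^ 2 * -1) ^ (k : ℕ) by ring, Complex.I_sq]
    simp
  simp only [sineVec, sineSeq, reversalPhase, hr, hNr, hsin, hsin', Complex.ofReal_mul,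
    Complex.ofReal_pow, Complex.ofReal_neg, Complex.ofReal_one]
  linear_combination (-1) ^ j * (sin (((k : ℕ) + 1 : ℕ) * θ) : ℂ) * hphase.symm

theorem sineVec_ne_zero {N : ℕ} (hN : 0 < N) {θ : ℝ} (hθ : θ ∈ Set.Ioo 0 π) :
    sineVec N θ ≠ 0 := fun h => by
  have h0 := congrFun h ⟨0, hN⟩
  simp only [sineVec, sineSeq, Pi.zero_apply] at h0
  norm_num [← Complex.ofReal_sin] at h0
  exact (sin_pos_of_pos_of_lt_pi hθ.1 hθ.2).ne' h0

theorem isUnit_det_sineMatrix {N : ℕ} {θ : Fin N → ℝ} (hθ : Function.Injective θ)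
    (hθπ : ∀ j, θ j ∈ Set.Ioo 0 π) {A : Matrix (Fin N) (Fin N) ℂ}
    (hA : ∀ j, A *ᵥ sineVec N (θ j) = (2 * I * cos (θ j)) • sineVec N (θ j)) :
    IsUnit (of fun j => sineVec N (θ j))ᵀ.det := by
  refine isUnit_det_transpose_of_of_mulVec_eq_smul (fun j j' h => hθ ?_)
    (fun j => sineVec_ne_zero (Fin.pos j) (hθπ j)) hA
  refine injOn_cos (Set.Ioo_subset_Icc_self (hθπ j)) (Set.Ioo_subset_Icc_self (hθπ j')) ?_
  simpa [← Complex.ofReal_cos] using h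

theorem cos_sq_sub_mul_pi_div (N k : ℕ) (hk : k ≤ N) :
    cos (((N - k : ℕ) : ℝ) * π / N) ^ 2 = cos (k * π / N) ^ 2 := by
  rcases Nat.eq_zero_or_pos N with rfl | hN
  · simp
  rw [Nat.cast_sub hk, show ((N : ℝ) - k) * π / N = π - k * π / N by field_simp, cos_pi_sub,
    neg_sq]

section Reindexing

variable {M : Type*} [CommMonoid M]

theorem prod_Icc_one_eq_prod_range (g : ℕ → M) (n : ℕ) :
    ∏ k ∈ Icc 1 n, g k = ∏ k ∈ range n, g (k + 1) := by
  rw [range_eq_Ico, prod_Ico_add' g 0 n 1, zero_add, Finset.Ico_add_one_right_eq_Icc]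

theorem prod_Icc_two_mul_eq_sq (g : ℕ → M) (n : ℕ)
    (hg : ∀ k ≤ 2 * n + 1, g (2 * n + 1 - k) = g k) :
    ∏ k ∈ Icc 1 (2 * n), g k = (∏ k ∈ Icc 1 n, g k) ^ 2 := by
  rw [prod_Icc_one_eq_prod_range, prod_Icc_one_eq_prod_range, two_mul, prod_range_add, sq,
    ← prod_range_reflect (fun k => g (n + k + 1))]
  congr 1
  refine prod_congr rfl fun k hk => ?_
  rw [mem_range] at hk
  rw [← hg (k + 1) (by omega)]
  congr 1
  omega

theorem prod_range_odd_eq_prod_Icc (g : ℕ → M) (n : ℕ)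
    (hg : ∀ k ≤ 2 * n + 1, g (2 * n + 1 - k) = g k) :
    ∏ l ∈ range n, g (2 * l + 1) = ∏ k ∈ Icc 1 n, g k := by
  refine prod_nbij' (fun l => if 2 * l + 1 ≤ n then 2 * l + 1 else 2 * n - 2 * l)
    (fun k => if k % 2 = 1 then k / 2 else n - k / 2) ?_ ?_ ?_ ?_ ?_
  all_goals intro l hl
  all_goals simp only [mem_range, mem_Icc] at hl ⊢
  · split_ifs <;> omega
  · split_ifs <;> omega
  · split_ifs <;> omega
  · split_ifs <;> omega
  · split_ifs
    · rfl
    · rw [← hg (2 * l + 1) (by omega)]; congr 1; omega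

end Reindexing

noncomputable def dirichletAngle (N : ℕ) (j : Fin N) : ℝ := ((j : ℕ) + 1) * π / (N + 1)

theorem natCast_add_one_mul_dirichletAngle {N : ℕ} (j : Fin N) :
    (N + 1) * dirichletAngle N j = ((j : ℕ) + 1) * π := by
  rw [dirichletAngle]; field_simp

theorem dirichletAngle_rev {N : ℕ} (j : Fin N) :
    dirichletAngle N j.rev = π - dirichletAngle N j := by
  have := j.isLt
  simp only [dirichletAngle, Fin.val_rev]
  rw [Nat.cast_sub (by omega)]
  field_simp
  push_cast
  ring

theorem dirichletAngle_mem_Ioo {N : ℕ} (j : Fin N) : dirichletAngle N j ∈ Set.Ioo 0 π := by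
  have : ((j : ℕ) : ℝ) + 1 < N + 1 := by exact_mod_cast Nat.succ_lt_succ j.isLt
  constructor
  · unfold dirichletAngle; positivity
  · rw [dirichletAngle, div_lt_iff₀ (by positivity)]; nlinarith [pi_pos]

theorem dirichletAngle_injective (N : ℕ) : Function.Injective (dirichletAngle N) := by
  intro j j' h
  simp only [dirichletAngle] at h
  field_simp at h
  exact Fin.ext (by exact_mod_cast add_right_cancel h)

noncomputable def dirichletSineMatrix (N : ℕ) : Matrix (Fin N) (Fin N) ℂ :=
  (of fun j => sineVec N (dirichletAngle N j))ᵀ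

theorem triToeplitz_mulVec_sineVec_dirichletAngle (N : ℕ) (x a : ℂ) (j : Fin N) :
    triToeplitz N (-a) x a *ᵥ sineVec N (dirichletAngle N j)
      = (x + 2 * I * a * cos (dirichletAngle N j)) • sineVec N (dirichletAngle N j) :=
  triToeplitz_mulVec_sineVec x a <| by
    rw [natCast_add_one_mul_dirichletAngle]; exact_mod_cast sin_nat_mul_pi ((j : ℕ) + 1)

theorem triToeplitz_mul_dirichletSineMatrix (N : ℕ) (x a : ℂ) :
    triToeplitz N (-a) x a * dirichletSineMatrix N
      = dirichletSineMatrix N * diagonal fun j => x + 2 * I * a * cos (dirichletAngle N j) :=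
  mul_transpose_of_eq_mul_diagonal_of_mulVec_eq_smul
    (triToeplitz_mulVec_sineVec_dirichletAngle N x a)

/-- Invertibility is read off from `T(-1, 0, 1)`, whose eigenvalues `2 i cos θⱼ` are distinct. -/
theorem isUnit_det_dirichletSineMatrix (N : ℕ) : IsUnit (dirichletSineMatrix N).det :=
  isUnit_det_sineMatrix (dirichletAngle_injective N) dirichletAngle_mem_Ioo
    (A := triToeplitz N (-1) 0 1) fun j => by
      simpa using triToeplitz_mulVec_sineVec_dirichletAngle N 0 1 j

theorem antiDiagOnes_mul_dirichletSineMatrix (N : ℕ) :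
    antiDiagOnes N * dirichletSineMatrix N
      = dirichletSineMatrix N
        * (antiDiagOnes N * diagonal fun j : Fin N => reversalPhase N j) := by
  ext k j
  rw [← Matrix.mul_assoc, mul_diagonal, antiDiagOnes_mul_apply, mul_antiDiagOnes_apply]
  simp only [dirichletSineMatrix, transpose_apply, of_apply, dirichletAngle_rev,
    sineVec_rev (natCast_add_one_mul_dirichletAngle j)]
  ring

theorem det_triToeplitz_add_smul_antiDiagOnes (m : ℕ) (x a : ℝ) (μ : ℂ) :
    det (triToeplitz (2 * m) (-a) x a + μ • antiDiagOnes (2 * m))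
      = ∏ j ∈ Icc 1 m,
          (((x ^ 2 + 4 * a ^ 2 * cos (j * π / (2 * m + 1)) ^ 2 : ℝ) : ℂ) - μ ^ 2) := by
  have hconj : (triToeplitz (2 * m) (-a) x a + μ • antiDiagOnes (2 * m)) * dirichletSineMatrix _
      = dirichletSineMatrix _
        * (diagonal (fun j => x + 2 * I * a * cos (dirichletAngle (2 * m) j))
          + antiDiagOnes (2 * m)
            * diagonal (μ • fun j : Fin (2 * m) => reversalPhase (2 * m) j)) := by
    rw [add_mul, smul_mul, triToeplitz_mul_dirichletSineMatrix,
      antiDiagOnes_mul_dirichletSineMatrix, mul_add, diagonal_smul, Matrix.mul_smul,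
      Matrix.mul_smul]
  rw [det_eq_det_of_mul_eq_mul (isUnit_det_dirichletSineMatrix _) hconj,
    det_diagonal_add_antiDiagOnes_mul_diagonal, prod_Icc_one_eq_prod_range,
    ← Fin.prod_univ_eq_prod_range]
  refine prod_congr rfl fun t _ => ?_
  have hphase := reversalPhase_mul_reversalPhase_rev (Fin.castLE (by omega : m ≤ 2 * m) t)
  have hangle : dirichletAngle (2 * m) (Fin.castLE (by omega) t)
      = ((t : ℕ) + 1 : ℕ) * π / (2 * m + 1) := by
    simp [dirichletAngle]
  simp only [Pi.smul_apply, smul_eq_mul, dirichletAngle_rev, cos_pi_sub, hangle]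
  set c := cos (((t : ℕ) + 1 : ℕ) * π / (2 * m + 1))
  push_cast
  linear_combination (-μ ^ 2) * hphase - 4 * (a : ℂ) ^ 2 * (c : ℂ) ^ 2 * Complex.I_sq

noncomputable def oddAngle (n : ℕ) (l : Fin n) : ℝ :=
  (2 * (l : ℕ) + 1 : ℕ) * π / (2 * n + 1)

/-- This is the boundary condition that absorbs the corner entry `i b` of `S`. -/
theorem sin_succ_mul_oddAngle {n : ℕ} (l : Fin n) :
    sin ((n + 1) * oddAngle n l) = sin (n * oddAngle n l) := by
  have hsplit : (n + 1) * oddAngle n l = (2 * (l : ℕ) + 1 : ℕ) * π - n * oddAngle n l := by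
    rw [oddAngle]; field_simp; ring
  rw [hsplit, sin_nat_mul_pi_sub, pow_succ, pow_mul]; ring_nf

theorem oddAngle_mem_Ioo {n : ℕ} (l : Fin n) : oddAngle n l ∈ Set.Ioo 0 π := by
  have : ((2 * (l : ℕ) + 1 : ℕ) : ℝ) < 2 * n + 1 := by
    have := l.isLt; exact_mod_cast (by omega : 2 * (l : ℕ) + 1 < 2 * n + 1)
  constructor
  · unfold oddAngle; positivity
  · rw [oddAngle, div_lt_iff₀ (by positivity)]; nlinarith [pi_pos]

theorem oddAngle_injective (n : ℕ) : Function.Injective (oddAngle n) := by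
  intro l l' h
  simp only [oddAngle] at h
  field_simp at h
  exact Fin.ext (by have := (Nat.cast_injective h : 2 * (l : ℕ) + 1 = 2 * l' + 1); omega)

noncomputable def oddSineMatrix (n : ℕ) : Matrix (Fin n) (Fin n) ℂ :=
  (of fun l => sineVec n (oddAngle n l))ᵀ

theorem triToeplitz_add_smul_cornerOne_mul_oddSineMatrix (n : ℕ) (b : ℂ) :
    (triToeplitz n (-b) 0 b + (I * b) • cornerOne n) * oddSineMatrix n
      = oddSineMatrix n * diagonal fun l => 2 * I * b * cos (oddAngle n l) :=
  mul_transpose_of_eq_mul_diagonal_of_mulVec_eq_smul fun l =>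
    triToeplitz_add_smul_cornerOne_mulVec_sineVec b (sin_succ_mul_oddAngle l)

theorem isUnit_det_oddSineMatrix (n : ℕ) : IsUnit (oddSineMatrix n).det :=
  isUnit_det_sineMatrix (oddAngle_injective n) oddAngle_mem_Ioo fun l => by
    simpa using triToeplitz_add_smul_cornerOne_mulVec_sineVec 1 (sin_succ_mul_oddAngle l)

theorem det_one_kronecker_triToeplitz_add_kronecker_antiDiagOnes {p : Type*} [Fintype p]
    [DecidableEq p] {S U : Matrix p p ℂ} {b : ℝ} {φ : p → ℝ} (hU : IsUnit U.det)
    (hSU : S * U = U * diagonal fun l => 2 * I * b * cos (φ l)) (m : ℕ) (x a : ℝ) :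
    det ((1 : Matrix p p ℂ) ⊗ₖ triToeplitz (2 * m) (-a) x a + S ⊗ₖ antiDiagOnes (2 * m))
      = ∏ l, ∏ j ∈ Icc 1 m, ((x ^ 2 + 4 * a ^ 2 * cos (j * π / (2 * m + 1)) ^ 2
          + 4 * b ^ 2 * cos (φ l) ^ 2 : ℝ) : ℂ) := by
  rw [det_one_kronecker_add_kronecker_of_mul_eq_mul_diagonal hU hSU]
  refine prod_congr rfl fun l _ => ?_
  rw [det_triToeplitz_add_smul_antiDiagOnes]
  refine prod_congr rfl fun t _ => ?_
  set c := cos (φ l)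
  push_cast
  linear_combination -4 * (b : ℂ) ^ 2 * (c : ℂ) ^ 2 * Complex.I_sq

noncomputable def gridFactor (m n : ℕ) (x a b : ℝ) (k : ℕ) : ℂ :=
  ∏ j ∈ Icc 1 m, ((x ^ 2 + 4 * a ^ 2 * cos (j * π / (2 * m + 1)) ^ 2
    + 4 * b ^ 2 * cos (k * π / (2 * n + 1)) ^ 2 : ℝ) : ℂ)

theorem gridFactor_two_mul_add_one_sub (m n : ℕ) (x a b : ℝ) {k : ℕ} (hk : k ≤ 2 * n + 1) :
    gridFactor m n x a b (2 * n + 1 - k) = gridFactor m n x a b k := by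
  have hcos := cos_sq_sub_mul_pi_div (2 * n + 1) k hk
  rw [Nat.cast_add_one, Nat.cast_mul, Nat.cast_two] at hcos
  simp only [gridFactor, hcos]

theorem det_quotient_grid_matrix_eq_prod_gridFactor (m n : ℕ) (x a b : ℝ) :
    det ((1 : Matrix (Fin n) (Fin n) ℂ) ⊗ₖ triToeplitz (2 * m) (-a) x a
      + (triToeplitz n (-b) 0 b + (I * b) • cornerOne n) ⊗ₖ antiDiagOnes (2 * m))
      = ∏ k ∈ Icc 1 n, gridFactor m n x a b k := by
  rw [det_one_kronecker_triToeplitz_add_kronecker_antiDiagOnes (isUnit_det_oddSineMatrix n)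
    (triToeplitz_add_smul_cornerOne_mul_oddSineMatrix n b),
    ← prod_range_odd_eq_prod_Icc _ n fun k => gridFactor_two_mul_add_one_sub m n x a b,
    ← Fin.prod_univ_eq_prod_range]
  rfl

theorem det_grid_matrix_eq_prod_gridFactor (m n : ℕ) (x a b : ℝ) :
    det ((1 : Matrix (Fin (2 * n)) (Fin (2 * n)) ℂ) ⊗ₖ triToeplitz (2 * m) (-a) x a
      + triToeplitz (2 * n) (-b) 0 b ⊗ₖ antiDiagOnes (2 * m))
      = ∏ k ∈ Icc 1 (2 * n), gridFactor m n x a b k := by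
  rw [det_one_kronecker_triToeplitz_add_kronecker_antiDiagOnes
    (isUnit_det_dirichletSineMatrix (2 * n))
    (by simpa using triToeplitz_mul_dirichletSineMatrix (2 * n) 0 b),
    prod_Icc_one_eq_prod_range, ← Fin.prod_univ_eq_prod_range]
  refine prod_congr rfl fun k _ => ?_
  rw [dirichletAngle, Nat.cast_mul, Nat.cast_two, ← Nat.cast_add_one]
  rfl

theorem quotient_grid_dicot_partition_function_general (m n : ℕ)
    (x a b : ℝ) :
    letI Ktilde : Matrix (Fin n × Fin (2 * m)) (Fin n × Fin (2 * m)) ℂ :=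
      (1 : Matrix (Fin n) (Fin n) ℂ) ⊗ₖ triToeplitz (2 * m) (-(a:ℂ)) (x:ℂ) (a:ℂ)
        + triToeplitz n (-(b:ℂ)) 0 (b:ℂ) ⊗ₖ antiDiagOnes (2 * m)
        + (Complex.I * (b:ℂ)) • (cornerOne n ⊗ₖ antiDiagOnes (2 * m))
    Ktilde.det
      = (((∏ j ∈ Finset.Icc 1 m, ∏ k ∈ Finset.Icc 1 n,
            (x ^ 2 + 4 * a ^ 2 * Real.cos ((j : ℝ) * Real.pi / (2 * (m : ℝ) + 1)) ^ 2
              + 4 * b ^ 2 * Real.cos ((k : ℝ) * Real.pi / (2 * (n : ℝ) + 1)) ^ 2)) : ℝ) : ℂ)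
    ∧ Ktilde.det ^ 2
      = ((1 : Matrix (Fin (2 * n)) (Fin (2 * n)) ℂ) ⊗ₖ triToeplitz (2 * m) (-(a:ℂ)) (x:ℂ) (a:ℂ)
          + triToeplitz (2 * n) (-(b:ℂ)) 0 (b:ℂ) ⊗ₖ antiDiagOnes (2 * m)).det := by
  rw [add_assoc, ← smul_kronecker, ← add_kronecker,
    det_quotient_grid_matrix_eq_prod_gridFactor,
    det_grid_matrix_eq_prod_gridFactor,
    prod_Icc_two_mul_eq_sq _ n fun k => gridFactor_two_mul_add_one_sub m n x a b]
  refine ⟨?_, rfl⟩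
  simp only [gridFactor, Complex.ofReal_prod]
  exact prod_comm

theorem quotient_grid_dicot_partition_function (m n : ℕ) (hm : 1 ≤ m) (hn : 1 ≤ n)
    (x a b : ℝ) :
    letI Ktilde : Matrix (Fin n × Fin (2 * m)) (Fin n × Fin (2 * m)) ℂ :=
      (1 : Matrix (Fin n) (Fin n) ℂ) ⊗ₖ triToeplitz (2 * m) (-(a:ℂ)) (x:ℂ) (a:ℂ)
        + triToeplitz n (-(b:ℂ)) 0 (b:ℂ) ⊗ₖ antiDiagOnes (2 * m)
        + (Complex.I * (b:ℂ)) • (cornerOne n ⊗ₖ antiDiagOnes (2 * m))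
    Ktilde.det
      = (((∏ j ∈ Finset.Icc 1 m, ∏ k ∈ Finset.Icc 1 n,
            (x ^ 2 + 4 * a ^ 2 * Real.cos ((j : ℝ) * Real.pi / (2 * (m : ℝ) + 1)) ^ 2
              + 4 * b ^ 2 * Real.cos ((k : ℝ) * Real.pi / (2 * (n : ℝ) + 1)) ^ 2)) : ℝ) : ℂ)
    ∧ Ktilde.det ^ 2
      = ((1 : Matrix (Fin (2 * n)) (Fin (2 * n)) ℂ) ⊗ₖ triToeplitz (2 * m) (-(a:ℂ)) (x:ℂ) (a:ℂ)
          + triToeplitz (2 * n) (-(b:ℂ)) 0 (b:ℂ) ⊗ₖ antiDiagOnes (2 * m)).det :=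
  quotient_grid_dicot_partition_function_general m n x a b
end

section
/- Let x, a, b₁, b₂ be positive real numbers and write |b|² = b₁² + b₂². Then the double limit as M → ∞ and N → ∞ of (1/(4MN)) · log ∏_{j=1}^{M} ∏_{k=1}^{N} ( x² + 4a² cos²(jπ/(2M+1)) + 4|b|² cos²(kπ/(2N+1)) )² exists and equals (2/π²) · ∫₀^{π/2} ∫₀^{π/2} log( x² + 4a² cos²θ + 4|b|² cos²φ ) dθ dφ. -/
/-! After `log ∏ g ^ 2 = 2 ∑ log g`, the normalised logarithm is `2 / π ^ 2` times a Riemann sum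
of the continuous function `log (x² + 4a² cos² θ + 4|b|² cos² φ)` for the uniform `M × N` grid on
`[0, π/2]²`, because the sample point `(j + 1)π / (2M + 1)` lies in the `j`-th cell
`[jπ / (2M), (j + 1)π / (2M)]`. Uniform continuity on the compact square makes these Riemann sums
converge to the double integral as both mesh sizes tend to zero. -/

open Filter Real Finset Function Topology MeasureTheory

lemma Finset.sum_Icc_one_eq_sum_range {M : Type*} [AddCommMonoid M] (f : ℕ → M) (n : ℕ) :
    ∑ i ∈ Icc 1 n, f i = ∑ i ∈ range n, f (i + 1) := by
  rw [range_eq_Ico, sum_Ico_add' f 0 n 1]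
  rfl

lemma Real.log_prod_prod_sq {ι κ : Type*} (s : Finset ι) (t : Finset κ) (g : ι → κ → ℝ)
    (hg : ∀ i ∈ s, ∀ k ∈ t, g i k ≠ 0) :
    log (∏ i ∈ s, ∏ k ∈ t, g i k ^ 2) = 2 * ∑ i ∈ s, ∑ k ∈ t, log (g i k) := by
  rw [log_prod fun i hi => prod_ne_zero_iff.2 fun k hk => pow_ne_zero 2 (hg i hi k hk), mul_sum]
  refine sum_congr rfl fun i hi => ?_
  rw [log_prod fun k hk => pow_ne_zero 2 (hg i hi k hk), mul_sum]
  simp only [log_pow, Nat.cast_ofNat]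

lemma intervalIntegral.abs_integral_sub_mul_le {f : ℝ → ℝ} {a b c ε : ℝ} (hab : a ≤ b)
    (hf : IntervalIntegrable f volume a b)
    (hc : ∀ t ∈ Set.Ioc a b, |f t - c| ≤ ε) :
    |(∫ t in a..b, f t) - c * (b - a)| ≤ ε * (b - a) := by
  have h := norm_integral_le_of_norm_le_const (f := fun t => f t - c) (C := ε) (a := a) (b := b)
    (by rwa [Set.uIoc_of_le hab])
  rwa [integral_sub hf intervalIntegrable_const, integral_const, smul_eq_mul, mul_comm,
    abs_of_nonneg (sub_nonneg.2 hab)] at h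

section RiemannSum

variable {F : ℝ → ℝ → ℝ}

lemma abs_integral_integral_sub_mul_le (hF : Continuous (uncurry F)) {u₀ u₁ v₀ v₁ c ε : ℝ}
    (hu : u₀ ≤ u₁) (hv : v₀ ≤ v₁)
    (hc : ∀ θ ∈ Set.Ioc u₀ u₁, ∀ φ ∈ Set.Ioc v₀ v₁, |F θ φ - c| ≤ ε) :
    |(∫ θ in u₀..u₁, ∫ φ in v₀..v₁, F θ φ) - c * ((u₁ - u₀) * (v₁ - v₀))|
      ≤ ε * ((u₁ - u₀) * (v₁ - v₀)) := by
  have hinner : ∀ θ ∈ Set.Ioc u₀ u₁,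
      |(∫ φ in v₀..v₁, F θ φ) - c * (v₁ - v₀)| ≤ ε * (v₁ - v₀) := fun θ hθ =>
    intervalIntegral.abs_integral_sub_mul_le hv
      ((hF.uncurry_left θ).intervalIntegrable _ _) (hc θ hθ)
  have h := intervalIntegral.abs_integral_sub_mul_le hu
    ((intervalIntegral.continuous_parametric_intervalIntegral_of_continuous' hF v₀ v₁
      ).intervalIntegrable _ _) hinner
  rwa [mul_comm (u₁ - u₀), ← mul_assoc, ← mul_assoc]

lemma intervalIntegral.integral_eq_sum_range_mul {f : ℝ → ℝ} (hf : Continuous f) (h : ℝ) (M : ℕ) :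
    ∫ t in 0..M * h, f t = ∑ j ∈ range M, ∫ t in j * h..(j + 1) * h, f t := by
  have := sum_integral_adjacent_intervals (f := f) (μ := volume) (a := fun j : ℕ => j * h)
    (n := M) fun _ _ => hf.intervalIntegrable _ _
  simpa using this.symm

lemma integral_integral_eq_sum_cells (hF : Continuous (uncurry F)) (h h' : ℝ) (M N : ℕ) :
    ∫ θ in 0..M * h, ∫ φ in 0..N * h', F θ φ =
      ∑ j ∈ range M, ∑ k ∈ range N,
        ∫ θ in j * h..(j + 1) * h, ∫ φ in k * h'..(k + 1) * h', F θ φ := by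
  rw [intervalIntegral.integral_eq_sum_range_mul
    (intervalIntegral.continuous_parametric_intervalIntegral_of_continuous' hF _ _)]
  refine sum_congr rfl fun j _ => ?_
  simp_rw [intervalIntegral.integral_eq_sum_range_mul (hF.uncurry_left _)]
  exact intervalIntegral.integral_finsetSum fun k _ =>
    (intervalIntegral.continuous_parametric_intervalIntegral_of_continuous' hF _ _
      ).intervalIntegrable _ _

lemma abs_sum_mul_sub_integral_integral_le (hF : Continuous (uncurry F)) {h h' ε : ℝ}
    (hh : 0 ≤ h) (hh' : 0 ≤ h') {M N : ℕ} (c : ℕ → ℕ → ℝ)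
    (hc : ∀ j < M, ∀ k < N, ∀ θ ∈ Set.Ioc (j * h) ((j + 1) * h),
      ∀ φ ∈ Set.Ioc (k * h') ((k + 1) * h'), |F θ φ - c j k| ≤ ε) :
    |h * h' * ∑ j ∈ range M, ∑ k ∈ range N, c j k - ∫ θ in 0..M * h, ∫ φ in 0..N * h', F θ φ|
      ≤ M * N * (h * h') * ε := by
  have hcell : ∀ j < M, ∀ k < N,
      |h * h' * c j k - ∫ θ in j * h..(j + 1) * h, ∫ φ in k * h'..(k + 1) * h', F θ φ|
        ≤ ε * (h * h') := by
    intro j hj k hk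
    have := abs_integral_integral_sub_mul_le hF (by nlinarith) (by nlinarith) (hc j hj k hk)
    rw [abs_sub_comm]
    convert this using 3 <;> ring
  rw [integral_integral_eq_sum_cells hF, mul_sum, ← sum_sub_distrib]
  calc |∑ j ∈ range M, (h * h' * ∑ k ∈ range N, c j k - ∑ k ∈ range N,
          ∫ θ in j * h..(j + 1) * h, ∫ φ in k * h'..(k + 1) * h', F θ φ)|
      ≤ ∑ j ∈ range M, ∑ k ∈ range N,
          |h * h' * c j k - ∫ θ in j * h..(j + 1) * h, ∫ φ in k * h'..(k + 1) * h', F θ φ| := by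
        refine (abs_sum_le_sum_abs _ _).trans (sum_le_sum fun j _ => ?_)
        rw [mul_sum, ← sum_sub_distrib]
        exact abs_sum_le_sum_abs _ _
    _ ≤ ∑ j ∈ range M, ∑ k ∈ range N, ε * (h * h') :=
        sum_le_sum fun j hj => sum_le_sum fun k hk =>
          hcell j (mem_range.1 hj) k (mem_range.1 hk)
    _ = M * N * (h * h') * ε := by simp only [sum_const, card_range, nsmul_eq_mul]; ring

lemma Set.Icc_mul_subset_Icc_zero_mul {h : ℝ} (hh : 0 ≤ h) {j M : ℕ} (hj : j < M) :
    Set.Icc (j * h) ((j + 1) * h) ⊆ Set.Icc 0 (M * h) := by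
  have hj' : (j : ℝ) + 1 ≤ M := by exact_mod_cast hj
  exact Set.Icc_subset_Icc (by positivity) (by nlinarith)

theorem tendsto_riemannSum_integral_integral (hF : Continuous (uncurry F))
    {L L' : ℝ} (hL : 0 ≤ L) (hL' : 0 ≤ L') (s t : ℕ → ℕ → ℝ)
    (hs : ∀ M : ℕ, ∀ j < M, s M j ∈ Set.Icc (j * (L / M)) ((j + 1) * (L / M)))
    (ht : ∀ N : ℕ, ∀ k < N, t N k ∈ Set.Icc (k * (L' / N)) ((k + 1) * (L' / N))) :
    Tendsto (fun p : ℕ × ℕ =>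
        L / p.1 * (L' / p.2) * ∑ j ∈ range p.1, ∑ k ∈ range p.2, F (s p.1 j) (t p.2 k))
      atTop (𝓝 (∫ θ in 0..L, ∫ φ in 0..L', F θ φ)) := by
  rw [Metric.tendsto_nhds]
  intro ε hε
  set ε' := ε / (L * L' + 1)
  obtain ⟨δ, hδ, hF_δ⟩ := Metric.uniformContinuousOn_iff_le.1
    ((isCompact_Icc.prod isCompact_Icc).uniformContinuousOn_of_continuous
      (s := Set.Icc 0 L ×ˢ Set.Icc 0 L') hF.continuousOn) ε' (by positivity)
  have hmesh : ∀ ℓ : ℝ, ∀ᶠ M : ℕ in atTop, M ≠ 0 ∧ ℓ / M ≤ δ := fun ℓ =>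
    (eventually_ne_atTop 0).and
      ((tendsto_const_div_atTop_nhds_zero_nat ℓ).eventually (eventually_le_nhds hδ))
  rw [← prod_atTop_atTop_eq]
  filter_upwards [(hmesh L).prod_mk (hmesh L')] with ⟨M, N⟩ ⟨⟨hM, hMδ⟩, hN, hNδ⟩
  dsimp only at *
  have hML : (M : ℝ) * (L / M) = L := mul_div_cancel₀ _ (Nat.cast_ne_zero.2 hM)
  have hNL : (N : ℝ) * (L' / N) = L' := mul_div_cancel₀ _ (Nat.cast_ne_zero.2 hN)
  have hh := div_nonneg hL M.cast_nonneg
  have hh' := div_nonneg hL' N.cast_nonneg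
  have hbound := abs_sum_mul_sub_integral_integral_le hF hh hh'
    (fun j k => F (s M j) (t N k)) (ε := ε') fun j hj k hk θ hθ φ hφ => by
      have hθ' := Set.Ioc_subset_Icc_self hθ
      have hφ' := Set.Ioc_subset_Icc_self hφ
      refine hF_δ (θ, φ)
        ⟨hML ▸ Set.Icc_mul_subset_Icc_zero_mul hh hj hθ',
          hNL ▸ Set.Icc_mul_subset_Icc_zero_mul hh' hk hφ'⟩
        (s M j, t N k)
        ⟨hML ▸ Set.Icc_mul_subset_Icc_zero_mul hh hj (hs M j hj),
          hNL ▸ Set.Icc_mul_subset_Icc_zero_mul hh' hk (ht N k hk)⟩ ?_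
      rw [Prod.dist_eq]
      exact max_le ((Real.dist_le_of_mem_Icc hθ' (hs M j hj)).trans (by linarith))
        ((Real.dist_le_of_mem_Icc hφ' (ht N k hk)).trans (by linarith))
  rw [hML, hNL] at hbound
  rw [Real.dist_eq]
  calc _ ≤ _ := hbound
    _ = L * L' * ε' := by field_simp
    _ < ε := by
      rw [mul_div_assoc', div_lt_iff₀ (by positivity)]
      nlinarith

end RiemannSum

lemma add_one_mul_div_two_mul_add_one_mem_Icc {c : ℝ} (hc : 0 ≤ c) {j M : ℕ} (hj : j < M) :
    ((j : ℝ) + 1) * c / (2 * M + 1) ∈ Set.Icc (j * (c / 2 / M)) ((j + 1) * (c / 2 / M)) := by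
  have hj' : (j : ℝ) + 1 ≤ M := by exact_mod_cast hj
  have hM : (0 : ℝ) < M := by linarith
  rw [div_div, mul_div_assoc', mul_div_assoc']
  constructor
  · rw [div_le_div_iff₀ (by positivity) (by positivity)]
    nlinarith
  · exact div_le_div_of_nonneg_left (by positivity) (by positivity) (by linarith)

theorem gridDicot_free_energy_general (x a b₁ b₂ : ℝ)
    (hx : 0 < x) :
    Filter.Tendsto
      (fun p : ℕ × ℕ =>
        (1 / (4 * (p.1 : ℝ) * (p.2 : ℝ))) *
          Real.log (∏ j ∈ Finset.Icc 1 p.1, ∏ k ∈ Finset.Icc 1 p.2,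
            (x ^ 2 + 4 * a ^ 2 * Real.cos ((j : ℝ) * Real.pi / (2 * (p.1 : ℝ) + 1)) ^ 2
              + 4 * (b₁ ^ 2 + b₂ ^ 2) *
                  Real.cos ((k : ℝ) * Real.pi / (2 * (p.2 : ℝ) + 1)) ^ 2) ^ 2))
      Filter.atTop
      (nhds ((2 / Real.pi ^ 2) *
        ∫ θ in (0:ℝ)..(Real.pi / 2), ∫ φ in (0:ℝ)..(Real.pi / 2),
          Real.log (x ^ 2 + 4 * a ^ 2 * Real.cos θ ^ 2
            + 4 * (b₁ ^ 2 + b₂ ^ 2) * Real.cos φ ^ 2))) := by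
  have hpos : ∀ θ φ : ℝ, 0 < x ^ 2 + 4 * a ^ 2 * cos θ ^ 2 + 4 * (b₁ ^ 2 + b₂ ^ 2) * cos φ ^ 2 :=
    fun θ φ => by positivity
  have hF : Continuous (uncurry fun θ φ : ℝ =>
      log (x ^ 2 + 4 * a ^ 2 * cos θ ^ 2 + 4 * (b₁ ^ 2 + b₂ ^ 2) * cos φ ^ 2)) :=
    Continuous.log (by fun_prop) fun p => (hpos p.1 p.2).ne'
  have hs : ∀ M : ℕ, ∀ j < M,
      ((j : ℝ) + 1) * π / (2 * M + 1) ∈ Set.Icc (j * (π / 2 / M)) ((j + 1) * (π / 2 / M)) :=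
    fun M j hj => add_one_mul_div_two_mul_add_one_mem_Icc pi_pos.le hj
  refine ((tendsto_riemannSum_integral_integral hF (by positivity) (by positivity) _ _ hs hs
    ).const_mul (2 / π ^ 2)).congr' ?_
  rw [← prod_atTop_atTop_eq]
  filter_upwards [(eventually_ne_atTop 0).prod_mk (eventually_ne_atTop 0)] with ⟨M, N⟩ ⟨hM, hN⟩
  rw [log_prod_prod_sq _ _ _ fun j _ k _ => (hpos _ _).ne', sum_Icc_one_eq_sum_range]
  simp_rw [sum_Icc_one_eq_sum_range]
  push_cast
  field_simp
  ring

theorem gridDicot_free_energy (x a b₁ b₂ : ℝ)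
    (hx : 0 < x) (ha : 0 < a) (hb₁ : 0 < b₁) (hb₂ : 0 < b₂) :
    Filter.Tendsto
      (fun p : ℕ × ℕ =>
        (1 / (4 * (p.1 : ℝ) * (p.2 : ℝ))) *
          Real.log (∏ j ∈ Finset.Icc 1 p.1, ∏ k ∈ Finset.Icc 1 p.2,
            (x ^ 2 + 4 * a ^ 2 * Real.cos ((j : ℝ) * Real.pi / (2 * (p.1 : ℝ) + 1)) ^ 2
              + 4 * (b₁ ^ 2 + b₂ ^ 2) *
                  Real.cos ((k : ℝ) * Real.pi / (2 * (p.2 : ℝ) + 1)) ^ 2) ^ 2))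
      Filter.atTop
      (nhds ((2 / Real.pi ^ 2) *
        ∫ θ in (0:ℝ)..(Real.pi / 2), ∫ φ in (0:ℝ)..(Real.pi / 2),
          Real.log (x ^ 2 + 4 * a ^ 2 * Real.cos θ ^ 2
            + 4 * (b₁ ^ 2 + b₂ ^ 2) * Real.cos φ ^ 2))) :=
  gridDicot_free_energy_general x a b₁ b₂ hx
end

section
/- Let α > 0 be a real number. Then the limit as n → ∞ of (1/n) · ∑_{j=0}^{n−1} log( 1 + α·cos²(πj/n) ) exists and equals 2 · log( (1 + √(1 + α)) / 2 ). -/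
/-!
With `s = √(1 + α)` and `r = (s - 1) / (s + 1)` one has the factorisation
`1 + α cos² θ = ((1 + s) / 2)² · |1 + r e^{2iθ}|²`. At `θ = jπ/n` the points `e^{2iθ}` are
the `n`-th roots of unity `ζ^j`, and `∏ⱼ (1 + r ζ^j) = 1 - (-r)^n`, so the averaged sum is
exactly `2 log ((1 + s) / 2) + (2 / n) log (1 - (-r)^n)`; since `|r| < 1` the last term tends to `0`.
-/

open Filter Real Finset

theorem IsPrimitiveRoot.prod_range_one_add_mul_pow {K : Type*} [Field K] {ζ : K} {n : ℕ}
    (hζ : IsPrimitiveRoot ζ n) (hn : 0 < n) (z : K) :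
    ∏ j ∈ range n, (1 + z * ζ ^ j) = 1 - (-z) ^ n := by
  rcases eq_or_ne z 0 with rfl | hz
  · simp [zero_pow hn.ne']
  have hroots := congrArg (Polynomial.eval (-z)⁻¹) (X_pow_sub_C_eq_prod hζ hn (one_pow n))
  simp only [Polynomial.eval_sub, Polynomial.eval_pow, Polynomial.eval_X, Polynomial.eval_C,
    Polynomial.eval_prod, mul_one] at hroots
  calc ∏ j ∈ range n, (1 + z * ζ ^ j) = ∏ j ∈ range n, (-z) * ((-z)⁻¹ - ζ ^ j) := by
        refine prod_congr rfl fun j _ => ?_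
        field_simp
        ring
    _ = (-z) ^ n * ((-z)⁻¹ ^ n - 1) := by rw [prod_mul_distrib, prod_const, card_range, hroots]
    _ = 1 - (-z) ^ n := by rw [mul_sub, ← mul_pow, mul_inv_cancel₀ (neg_ne_zero.2 hz)]; ring

theorem Complex.normSq_one_add_ofReal_mul_exp (r θ : ℝ) :
    Complex.normSq (1 + r * Complex.exp (θ * Complex.I)) = 1 + r ^ 2 + 2 * r * Real.cos θ := by
  rw [Complex.normSq_apply]
  simp only [Complex.add_re, Complex.add_im, Complex.one_re, Complex.one_im, Complex.mul_re,
    Complex.mul_im, Complex.ofReal_re, Complex.ofReal_im, Complex.exp_ofReal_mul_I_re,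
    Complex.exp_ofReal_mul_I_im, zero_mul, sub_zero, zero_add, add_zero]
  linear_combination r ^ 2 * Real.sin_sq_add_cos_sq θ

theorem abs_sub_one_div_add_one_lt_one {s : ℝ} (hs : 0 < s) : |(s - 1) / (s + 1)| < 1 := by
  rw [abs_div, abs_of_pos (by linarith : 0 < s + 1), div_lt_one (by linarith), abs_lt]
  constructor <;> linarith

theorem log_one_add_mul_cos_sq {s : ℝ} (hs : 0 < s) (θ : ℝ) :
    log (1 + (s ^ 2 - 1) * cos θ ^ 2) = 2 * log ((1 + s) / 2) +
      log (Complex.normSq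
        (1 + ((s - 1) / (s + 1) : ℝ) * Complex.exp ((2 * θ : ℝ) * Complex.I))) := by
  have hfactor : 1 + (s ^ 2 - 1) * cos θ ^ 2 = ((1 + s) / 2) ^ 2 * Complex.normSq
      (1 + ((s - 1) / (s + 1) : ℝ) * Complex.exp ((2 * θ : ℝ) * Complex.I)) := by
    rw [Complex.normSq_one_add_ofReal_mul_exp, cos_two_mul]
    field_simp
    ring
  have hnormSq : Complex.normSq (1 + ((s - 1) / (s + 1) : ℝ) *
      Complex.exp ((2 * θ : ℝ) * Complex.I)) ≠ 0 := by
    intro h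
    rw [h, mul_zero] at hfactor
    nlinarith [cos_sq_le_one θ, mul_pos hs hs, sq_nonneg (s * cos θ)]
  rw [hfactor, log_mul (by positivity) hnormSq, log_pow]
  push_cast
  ring

theorem sum_log_normSq_one_add_ofReal_mul_pow {ζ : ℂ} {n : ℕ} (hζ : IsPrimitiveRoot ζ n)
    (hn : 0 < n) {r : ℝ} (hr : |r| < 1) :
    ∑ j ∈ range n, log (Complex.normSq (1 + r * ζ ^ j)) = 2 * log (1 - (-r) ^ n) := by
  have hprod := hζ.prod_range_one_add_mul_pow hn (r : ℂ)
  have hpow : |(-r) ^ n| < 1 := by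
    rw [abs_pow, abs_neg]
    exact pow_lt_one₀ (abs_nonneg r) hr hn.ne'
  have hne : 1 - (-r) ^ n ≠ 0 := by linarith [(abs_lt.1 hpow).2]
  have hprod_ne : ∏ j ∈ range n, (1 + r * ζ ^ j) ≠ 0 := by rw [hprod]; exact_mod_cast hne
  have hfactors : ∀ j ∈ range n, Complex.normSq (1 + r * ζ ^ j) ≠ 0 := fun j hj =>
    Complex.normSq_eq_zero.not.2 (prod_ne_zero_iff.1 hprod_ne j hj)
  rw [← log_prod hfactors, ← map_prod, hprod]
  rw [show (1 : ℂ) - (-(r : ℂ)) ^ n = ((1 - (-r) ^ n : ℝ) : ℂ) by push_cast; ring,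
    Complex.normSq_ofReal, log_mul hne hne]
  ring

theorem tendsto_inv_mul_sum_log_normSq_one_add_ofReal_mul_pow {r : ℝ} (hr : |r| < 1) :
    Tendsto (fun n : ℕ => (1 / (n : ℝ)) * ∑ j ∈ range n,
      log (Complex.normSq (1 + r * Complex.exp (2 * π * Complex.I / n) ^ j))) atTop (nhds 0) := by
  have hlog : Tendsto (fun n : ℕ => log (1 - (-r) ^ n)) atTop (nhds 0) := by
    have hpow := tendsto_pow_atTop_nhds_zero_of_abs_lt_one (by rwa [abs_neg] : |-r| < 1)
    have hsub : Tendsto (fun n : ℕ => 1 - (-r) ^ n) atTop (nhds 1) := by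
      simpa using tendsto_const_nhds.sub hpow
    simpa using hsub.log one_ne_zero
  have hlim := tendsto_one_div_atTop_nhds_zero_nat.mul (hlog.const_mul 2)
  rw [zero_mul] at hlim
  refine hlim.congr' ?_
  filter_upwards [eventually_gt_atTop 0] with n hn
  rw [sum_log_normSq_one_add_ofReal_mul_pow (Complex.isPrimitiveRoot_exp n hn.ne') hn hr]

theorem wheelDicot_free_energy (α : ℝ) (hα : 0 < α) :
    Filter.Tendsto
      (fun n : ℕ => (1 / (n : ℝ)) * ∑ j ∈ Finset.range n,
        Real.log (1 + α * Real.cos ((j : ℝ) * Real.pi / (n : ℝ)) ^ 2))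
      Filter.atTop
      (nhds (2 * Real.log ((1 + Real.sqrt (1 + α)) / 2))) := by
  set s := √(1 + α)
  have hs : 0 < s := sqrt_pos.2 (by linarith)
  have hα' : α = s ^ 2 - 1 := by rw [sq_sqrt (by linarith)]; ring
  have hterm : ∀ n j : ℕ, log (1 + α * cos (j * π / n) ^ 2) = 2 * log ((1 + s) / 2) +
      log (Complex.normSq
        (1 + ((s - 1) / (s + 1) : ℝ) * Complex.exp (2 * π * Complex.I / n) ^ j)) := by
    intro n j
    rw [hα', log_one_add_mul_cos_sq hs, ← Complex.exp_nat_mul]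
    push_cast
    ring_nf
  have hlim := (tendsto_const_nhds (x := 2 * log ((1 + s) / 2))).add
    (tendsto_inv_mul_sum_log_normSq_one_add_ofReal_mul_pow (abs_sub_one_div_add_one_lt_one hs))
  rw [add_zero] at hlim
  refine hlim.congr' ?_
  filter_upwards [eventually_gt_atTop 0] with n hn
  simp only [hterm n, sum_add_distrib, sum_const, card_range, nsmul_eq_mul]
  field_simp
end
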